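/- Let 0≤n≤m≤N be integers and let f∈V_{h,n} satisfy either n=0 or L_n f=0. Then L_{m+1}L_{m+2}⋯L_N R_{N−1}R_{N−2}⋯R_n f = (−1)^{N−m} q^{−(N−m)(N+m+1)/2} (q^{m−n+1};q)_{N−m} (A_h q^{n+m+h};q)_{N−m} · R_{m−1}R_{m−2}⋯R_n f (products of consecutive operators, the empty product being the identity; the exponent −(N−m)(N+m+1)/2 is an integer). -/
import Mathlib


open Finset

noncomputable section

/-- q-shifted factorial `(a;q)_m`. -/
def qPoch (q a : ℝ) (m : ℕ) : ℝ := ∏ k ∈ Finset.range m, (1 - a * q ^ k)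

/-- Partial sum `X_k = x_1 + ⋯ + x_k` (entries of index `< k`, 0-indexed). -/
def Xlt {h : ℕ} (x : Fin h → ℕ) (k : ℕ) : ℕ := ∑ j : Fin h, if (j : ℕ) < k then x j else 0

/-- Partial product `A_k = α_1 ⋯ α_k` (entries of index `< k`, 0-indexed). -/
def Apar {h : ℕ} (α : Fin h → ℝ) (k : ℕ) : ℝ := ∏ j : Fin h, if (j : ℕ) < k then α j else 1

/-- Raising operator `R_N : V_{h,N} → V_{h,N+1}`. -/
def Rop (q : ℝ) {h : ℕ} (N : ℕ) (f : (Fin h → ℕ) → ℂ) : (Fin h → ℕ) → ℂ := fun x =>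
  ∑ i : Fin h, (q : ℂ) ^ ((Xlt x i : ℤ) - N - 1) * (1 - (q : ℂ) ^ (x i)) *
    f (Function.update x i (x i - 1))

/-- Lowering operator `L_N : V_{h,N} → V_{h,N-1}` (its defining formula does not involve `N`). -/
def Lop (q : ℝ) {h : ℕ} (α : Fin h → ℝ) (f : (Fin h → ℕ) → ℂ) : (Fin h → ℕ) → ℂ := fun x =>
  ∑ j : Fin h, ((Apar α j : ℝ) : ℂ) * (q : ℂ) ^ ((j : ℕ) + Xlt x j) *
    ((α j : ℂ) * (q : ℂ) ^ (x j + 1) - 1) * f (Function.update x j (x j + 1))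

/-- The multidimensional q-Hahn operator `D_N : V_{h,N} → V_{h,N}`. -/
def Dop (q : ℝ) {h : ℕ} (α : Fin h → ℝ) (N : ℕ) (f : (Fin h → ℕ) → ℂ) : (Fin h → ℕ) → ℂ :=
  fun x =>
    (∑ i : Fin h, ∑ j : Fin h,
      if i ≠ j then
        ((Apar α j : ℝ) : ℂ) *
          (q : ℂ) ^ ((((j : ℕ) + Xlt x j + Xlt x i : ℕ) : ℤ) - N -
            (if (i : ℕ) < (j : ℕ) then 1 else 0)) *
          ((α j : ℂ) * (q : ℂ) ^ (x j + 1) - 1) * (1 - (q : ℂ) ^ (x i)) *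
          f (Function.update (Function.update x j (x j + 1)) i (x i - 1))
      else 0)
    + ((∑ j : Fin h,
          ((Apar α j : ℝ) : ℂ) * (q : ℂ) ^ ((((j : ℕ) + 2 * Xlt x j : ℕ) : ℤ) - N) *
            ((α j : ℂ) * (q : ℂ) ^ (x j) - 1) * (1 - (q : ℂ) ^ (x j)))
        + (((Apar α h : ℝ) : ℂ) * (q : ℂ) ^ (((h + N : ℕ) : ℤ) - 1) - 1) *
            (1 - (q : ℂ) ^ (-(N : ℤ)))) * f x

/-- Scalar product on `V_{h,N}`. -/
def innerV (q : ℝ) {h : ℕ} (α : Fin h → ℝ) (N : ℕ) (f g : (Fin h → ℕ) → ℂ) : ℂ :=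
  (q : ℂ) ^ (N * (N + 1) / 2) *
    ∑ x ∈ Finset.Nat.antidiagonalTuple h N,
      (∏ i : Fin h, ((qPoch q (q * α i) (x i) / qPoch q q (x i) : ℝ) : ℂ) *
        ((α i * q : ℝ) : ℂ) ^ ((N : ℤ) - Xlt x ((i : ℕ) + 1))) *
      f x * (starRingEnd ℂ) (g x)

/-- `RopIter q n k f = R_{n+k-1} ⋯ R_{n+1} R_n f`. -/
def RopIter (q : ℝ) {h : ℕ} (n : ℕ) : ℕ → ((Fin h → ℕ) → ℂ) → ((Fin h → ℕ) → ℂ)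
  | 0, f => f
  | k + 1, f => Rop q (n + k) (RopIter q n k f)

lemma Xlt_cast_update {h : ℕ} (x : Fin h → ℕ) (i : Fin h) (v k : ℕ) :
    (Xlt (Function.update x i v) k : ℤ) = Xlt x k + (if (i:ℕ) < k then (v:ℤ) - x i else 0) := by
  unfold Xlt
  push_cast
  have key : ∀ j : Fin h, (if (j:ℕ) < k then ((Function.update x i v j : ℕ) : ℤ) else 0)
      = (if (j:ℕ) < k then (x j : ℤ) else 0) + (if j = i then (if (i:ℕ) < k then (v:ℤ) - x i else 0) else 0) := by
    intro j
    by_cases hj : j = i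
    · subst hj; simp only [Function.update_self, if_pos rfl]
      split_ifs <;> ring
    · simp [Function.update_of_ne hj, hj]
  rw [Finset.sum_congr rfl (fun j _ => key j), Finset.sum_add_distrib,
    Finset.sum_ite_eq' Finset.univ i]
  simp

lemma Xlt_update_self {h : ℕ} (x : Fin h → ℕ) (i : Fin h) (v : ℕ) :
    Xlt (Function.update x i v) (i:ℕ) = Xlt x (i:ℕ) := by
  have := Xlt_cast_update x i v (i:ℕ)
  simp at this
  exact_mod_cast this

lemma Xlt_succ {h : ℕ} (x : Fin h → ℕ) (i : Fin h) :
    Xlt x ((i:ℕ)+1) = Xlt x (i:ℕ) + x i := by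
  unfold Xlt
  have key : ∀ j : Fin h, (if (j:ℕ) < (i:ℕ)+1 then x j else 0)
      = (if (j:ℕ) < (i:ℕ) then x j else 0) + (if j = i then x i else 0) := by
    intro j
    by_cases hj : j = i
    · subst hj; simp
    · have : (j:ℕ) ≠ (i:ℕ) := fun hc => hj (Fin.ext hc)
      split_ifs <;> simp_all <;> omega
  rw [Finset.sum_congr rfl (fun j _ => key j), Finset.sum_add_distrib,
    Finset.sum_ite_eq' Finset.univ i]
  simp

lemma Xlt_zero {h : ℕ} (x : Fin h → ℕ) : Xlt x 0 = 0 := by simp [Xlt]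

lemma Xlt_top {h : ℕ} (x : Fin h → ℕ) : Xlt x h = ∑ j, x j := by
  unfold Xlt; exact Finset.sum_congr rfl (fun j _ => if_pos j.isLt)

lemma Apar_zero {h : ℕ} (α : Fin h → ℝ) : Apar α 0 = 1 := by simp [Apar]

lemma Apar_succ {h : ℕ} (α : Fin h → ℝ) (i : Fin h) :
    Apar α ((i:ℕ)+1) = Apar α (i:ℕ) * α i := by
  unfold Apar
  have key : ∀ j : Fin h, (if (j:ℕ) < (i:ℕ)+1 then α j else 1)
      = (if (j:ℕ) < (i:ℕ) then α j else 1) * (if j = i then α i else 1) := by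
    intro j
    by_cases hj : j = i
    · subst hj; simp
    · have : (j:ℕ) ≠ (i:ℕ) := fun hc => hj (Fin.ext hc)
      split_ifs <;> simp_all <;> omega
  rw [Finset.prod_congr rfl (fun j _ => key j), Finset.prod_mul_distrib,
    Finset.prod_ite_eq' Finset.univ i]
  simp

lemma sum_update_succ {h : ℕ} (x : Fin h → ℕ) (i : Fin h) :
    ∑ j, Function.update x i (x i + 1) j = (∑ j, x j) + 1 := by
  rw [Finset.sum_update_of_mem (Finset.mem_univ i), Finset.sdiff_singleton_eq_erase,
    ← Finset.sum_erase_add Finset.univ x (Finset.mem_univ i)]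
  ring

lemma sum_update_pred {h : ℕ} (x : Fin h → ℕ) (i : Fin h) (hxi : 1 ≤ x i) :
    (∑ j, Function.update x i (x i - 1) j) + 1 = ∑ j, x j := by
  rw [Finset.sum_update_of_mem (Finset.mem_univ i), Finset.sdiff_singleton_eq_erase,
    ← Finset.sum_erase_add Finset.univ x (Finset.mem_univ i)]
  omega

variable {q : ℝ} {h : ℕ} {α : Fin h → ℝ}

lemma Lop_congr {f g : (Fin h → ℕ) → ℂ} (x : Fin h → ℕ)
    (hfg : ∀ y : Fin h → ℕ, (∑ j, y j) = (∑ j, x j) + 1 → f y = g y) :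
    Lop q α f x = Lop q α g x := by
  unfold Lop
  refine Finset.sum_congr rfl (fun j _ => ?_)
  rw [hfg _ (sum_update_succ x j)]

lemma Rop_congr {N : ℕ} {f g : (Fin h → ℕ) → ℂ} (x : Fin h → ℕ)
    (hfg : ∀ y : Fin h → ℕ, (∑ j, y j) + 1 = (∑ j, x j) → f y = g y) :
    Rop q N f x = Rop q N g x := by
  unfold Rop
  refine Finset.sum_congr rfl (fun i _ => ?_)
  by_cases hxi : x i = 0
  · simp [hxi]
  · rw [hfg _ (sum_update_pred x i (by omega))]

lemma Lop_smul (c : ℂ) (f : (Fin h → ℕ) → ℂ) (x : Fin h → ℕ) :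
    Lop q α (fun y => c * f y) x = c * Lop q α f x := by
  unfold Lop
  rw [Finset.mul_sum]
  exact Finset.sum_congr rfl (fun j _ => by ring)

lemma Rop_smul {N : ℕ} (c : ℂ) (f : (Fin h → ℕ) → ℂ) (x : Fin h → ℕ) :
    Rop q N (fun y => c * f y) x = c * Rop q N f x := by
  unfold Rop
  rw [Finset.mul_sum]
  exact Finset.sum_congr rfl (fun j _ => by ring)

lemma Rop_shift (hq : (q:ℂ) ≠ 0) {N : ℕ} (f : (Fin h → ℕ) → ℂ) (x : Fin h → ℕ) :
    Rop q (N+1) f x = (q:ℂ)⁻¹ * Rop q N f x := by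
  unfold Rop
  rw [Finset.mul_sum]
  refine Finset.sum_congr rfl (fun i _ => ?_)
  have : ((Xlt x i : ℤ) - (N+1 : ℕ) - 1) = ((Xlt x i : ℤ) - N - 1) + (-1) := by push_cast; ring
  rw [this, zpow_add₀ hq, zpow_neg, zpow_one]
  ring

lemma iterLop_congr (d : ℕ) {f g : (Fin h → ℕ) → ℂ} (x : Fin h → ℕ)
    (hfg : ∀ y : Fin h → ℕ, (∑ j, y j) = (∑ j, x j) + d → f y = g y) :
    (Lop q α)^[d] f x = (Lop q α)^[d] g x := by
  induction d generalizing f g x with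
  | zero => simpa using hfg x (by simp)
  | succ d ih =>
    rw [Function.iterate_succ_apply, Function.iterate_succ_apply]
    refine ih _ (fun y hy => ?_)
    refine Lop_congr y (fun z hz => hfg z (by omega))

lemma iterLop_smul (d : ℕ) (c : ℂ) (f : (Fin h → ℕ) → ℂ) (x : Fin h → ℕ) :
    (Lop q α)^[d] (fun y => c * f y) x = c * (Lop q α)^[d] f x := by
  induction d generalizing f x with
  | zero => simp
  | succ d ih =>
    rw [Function.iterate_succ_apply, Function.iterate_succ_apply]
    rw [← ih (Lop q α f) x]
    exact iterLop_congr d x (fun y _ => Lop_smul c f y)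

lemma Xlt_le {h : ℕ} (x : Fin h → ℕ) (i j : Fin h) (hij : (i:ℕ) < (j:ℕ)) :
    x i ≤ Xlt x (j:ℕ) := by
  unfold Xlt
  have := Finset.single_le_sum (f := fun j' : Fin h => if (j':ℕ) < (j:ℕ) then x j' else 0)
    (fun _ _ => Nat.zero_le _) (Finset.mem_univ i)
  simpa [hij] using this

def muC (q : ℝ) {h : ℕ} (α : Fin h → ℝ) (M : ℕ) : ℂ :=
  -(1 - (q:ℂ)) * (q:ℂ)^(-(M:ℤ)-1) * (1 - ((Apar α h : ℝ):ℂ) * (q:ℂ)^(h + 2*M))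

lemma commLR (hq : (q:ℂ) ≠ 0) (M : ℕ) (g : (Fin h → ℕ) → ℂ) (x : Fin h → ℕ)
    (hx : (∑ i, x i) = M) :
    Lop q α (Rop q M g) x = (q:ℂ) * Rop q M (Lop q α g) x + muC q α M * g x := by
  have tele : ∑ i : Fin h, ((-(1-(q:ℂ)) * (q:ℂ)^(-(M:ℤ)-1)) *
      (((Apar α (i:ℕ) : ℝ):ℂ) * (q:ℂ)^((i:ℕ) + 2 * Xlt x (i:ℕ))
        - ((Apar α ((i:ℕ)+1) : ℝ):ℂ) * (q:ℂ)^(((i:ℕ)+1) + 2 * Xlt x ((i:ℕ)+1))) * g x)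
      = muC q α M * g x := by
    have h2 : ∑ i : Fin h, (((Apar α (i:ℕ) : ℝ):ℂ) * (q:ℂ)^((i:ℕ) + 2 * Xlt x (i:ℕ))
        - ((Apar α ((i:ℕ)+1) : ℝ):ℂ) * (q:ℂ)^(((i:ℕ)+1) + 2 * Xlt x ((i:ℕ)+1)))
        = 1 - ((Apar α h : ℝ):ℂ) * (q:ℂ)^(h + 2*M) := by
      rw [Fin.sum_univ_eq_sum_range (fun k => ((Apar α k : ℝ):ℂ) * (q:ℂ)^(k + 2 * Xlt x k)
        - ((Apar α (k+1) : ℝ):ℂ) * (q:ℂ)^((k+1) + 2 * Xlt x (k+1))) h]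
      rw [Finset.sum_range_sub' (fun k => ((Apar α k : ℝ):ℂ) * (q:ℂ)^(k + 2 * Xlt x k)) h]
      rw [Apar_zero, Xlt_zero, Xlt_top, hx]
      norm_num
    rw [← Finset.sum_mul, ← Finset.mul_sum, h2]
    simp only [muC]
    try ring
  rw [← tele]
  simp only [Lop, Rop]
  simp only [Finset.mul_sum]
  rw [Finset.sum_comm]
  rw [← sub_eq_iff_eq_add']
  simp only [← Finset.sum_sub_distrib]
  refine Finset.sum_congr rfl (fun i _ => ?_)
  refine (Finset.sum_eq_single_of_mem i (Finset.mem_univ i) ?_).trans ?_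
  · intro j _ hj
    have hij : i ≠ j := Ne.symm hj
    have hijn : (i:ℕ) ≠ (j:ℕ) := fun e => hij (Fin.ext e)
    simp only [Function.update_of_ne hij, Function.update_of_ne hj]
    by_cases hxi : x i = 0
    · simp [hxi]
    · obtain ⟨y, hy⟩ : ∃ y, x i = y + 1 := ⟨x i - 1, by omega⟩
      rw [Function.update_comm hij]
      have e1 : (Xlt (Function.update x j (x j + 1)) (i:ℕ) : ℤ) - M - 1
          = ((Xlt x (i:ℕ) + if (j:ℕ) < (i:ℕ) then 1 else 0 : ℕ) : ℤ) + (-(M:ℤ)-1) := by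
        rw [Xlt_cast_update]; push_cast; split_ifs <;> ring
      have e2 : (Xlt x (i:ℕ) : ℤ) - M - 1 = ((Xlt x (i:ℕ) : ℕ) : ℤ) + (-(M:ℤ)-1) := by
        push_cast; ring
      rw [e1, e2, zpow_add₀ hq, zpow_add₀ hq, zpow_natCast, zpow_natCast, hy]
      simp only [Nat.add_sub_cancel]
      rcases hijn.lt_or_gt with hlt | hlt
      · -- i < j
        have hle := Xlt_le x i j hlt
        have hcu := Xlt_cast_update x i y (j:ℕ)
        rw [if_pos hlt] at hcu
        have hXj : Xlt x (j:ℕ) = Xlt (Function.update x i y) (j:ℕ) + 1 := by omega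
        rw [hXj, if_neg (Nat.lt_asymm hlt)]
        ring
      · -- j < i
        have hcu := Xlt_cast_update x i y (j:ℕ)
        rw [if_neg (Nat.lt_asymm hlt)] at hcu
        have hXj : Xlt (Function.update x i y) (j:ℕ) = Xlt x (j:ℕ) := by omega
        rw [hXj, if_pos hlt]
        ring
  · simp only [Function.update_self, Function.update_idem, Xlt_update_self,
      Nat.add_sub_cancel, Function.update_eq_self]
    have e2 : (Xlt x (i:ℕ) : ℤ) - M - 1 = ((Xlt x (i:ℕ) : ℕ) : ℤ) + (-(M:ℤ)-1) := by
      push_cast; ring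
    rw [e2, zpow_add₀ hq, zpow_natCast, Apar_succ α i, Xlt_succ x i]
    by_cases hxi : x i = 0
    · simp only [hxi]
      push_cast
      ring
    · obtain ⟨y, hy⟩ : ∃ y, x i = y + 1 := ⟨x i - 1, by omega⟩
      rw [hy]
      simp only [Nat.add_sub_cancel]
      have hupd : Function.update x i (y+1) = x := by rw [← hy]; exact Function.update_eq_self i x
      rw [hupd]
      push_cast
      ring

def lamC (q : ℝ) {h : ℕ} (α : Fin h → ℝ) (n k : ℕ) : ℂ :=
  -(q:ℂ)^(-((n:ℤ)+k)) * (1 - (q:ℂ)^(k:ℤ)) *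
    (1 - ((Apar α h : ℝ):ℂ) * (q:ℂ)^((h:ℤ)+2*n+k-1))

lemma lam_one (hq : (q:ℂ) ≠ 0) (n : ℕ) : muC q α n = lamC q α n 1 := by
  simp only [muC, lamC]
  rw [← zpow_natCast (q:ℂ) (h + 2*n)]
  push_cast
  rw [show -(n:ℤ)-1 = (-(n:ℤ)) + (-1) by ring,
    show -((n:ℤ)+1) = (-(n:ℤ)) + (-1) by ring,
    show (h:ℤ)+2*(n:ℤ)+1-1 = (h:ℤ) + ((n:ℤ) + (n:ℤ)) by ring,
    show (h:ℤ)+2*(n:ℤ) = (h:ℤ) + ((n:ℤ) + (n:ℤ)) by ring]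
  simp only [zpow_add₀ hq, zpow_one]
  ring

lemma lam_succ (hq : (q:ℂ) ≠ 0) (n k : ℕ) :
    lamC q α n (k+1) = lamC q α n k + muC q α (n+k) := by
  simp only [muC, lamC]
  rw [← zpow_natCast (q:ℂ) (h + 2*(n+k))]
  push_cast
  rw [show -((n:ℤ)+(k:ℤ))-1 = (-(n:ℤ)) + ((-(k:ℤ)) + (-1)) by ring,
    show -((n:ℤ)+((k:ℤ)+1)) = (-(n:ℤ)) + ((-(k:ℤ)) + (-1)) by ring,
    show (h:ℤ)+2*(n:ℤ)+((k:ℤ)+1)-1 = (h:ℤ) + ((n:ℤ) + ((n:ℤ) + (k:ℤ))) by ring,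
    show -((n:ℤ)+(k:ℤ)) = (-(n:ℤ)) + (-(k:ℤ)) by ring,
    show (h:ℤ)+2*(n:ℤ)+(k:ℤ)-1 = (h:ℤ) + ((n:ℤ) + ((n:ℤ) + ((k:ℤ) + (-1)))) by ring,
    show (h:ℤ)+2*((n:ℤ)+(k:ℤ)) = (h:ℤ) + ((n:ℤ) + ((n:ℤ) + ((k:ℤ) + (k:ℤ)))) by ring,
    show (k:ℤ)+1 = (k:ℤ) + (1:ℤ) by ring]
  simp only [zpow_add₀ hq, zpow_one, zpow_neg, zpow_natCast]
  have hn : (q:ℂ)^n ≠ 0 := pow_ne_zero _ hq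
  have hk : (q:ℂ)^k ≠ 0 := pow_ne_zero _ hq
  field_simp
  ring

lemma claimB (hq : (q:ℂ) ≠ 0) (n : ℕ) (f : (Fin h → ℕ) → ℂ)
    (hker : n = 0 ∨ ∀ x : Fin h → ℕ, (∑ i, x i) + 1 = n → Lop q α f x = 0)
    (k : ℕ) (hk : 1 ≤ k) :
    ∀ x : Fin h → ℕ, (∑ i, x i) + 1 = n + k →
      Lop q α (RopIter q n k f) x = lamC q α n k * RopIter q n (k-1) f x := by
  induction k with
  | zero => omega
  | succ k ih =>
    intro x hx
    by_cases hk0 : k = 0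
    · subst hk0
      have hs : (∑ i, x i) = n := by omega
      have h1 : RopIter q n 1 f = Rop q n f := by
        show Rop q (n+0) (RopIter q n 0 f) = Rop q n f
        rfl
      rw [h1, commLR hq n f x hs]
      have hz : Rop q n (Lop q α f) x = 0 := by
        unfold Rop
        refine Finset.sum_eq_zero (fun i _ => ?_)
        by_cases hxi : x i = 0
        · simp [hxi]
        · have hle : x i ≤ ∑ j, x j :=
            Finset.single_le_sum (fun _ _ => Nat.zero_le _) (Finset.mem_univ i)
          have hLz : Lop q α f (Function.update x i (x i - 1)) = 0 := by
            rcases hker with h0 | hK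
            · omega
            · exact hK _ (by have := sum_update_pred x i (by omega); omega)
          rw [hLz, mul_zero]
      rw [hz, mul_zero, zero_add, lam_one hq]
      rfl
    · obtain ⟨k', rfl⟩ : ∃ k', k = k' + 1 := ⟨k-1, by omega⟩
      have hs : (∑ i, x i) = n + (k'+1) := by omega
      have h1 : RopIter q n (k'+1+1) f = Rop q (n+(k'+1)) (RopIter q n (k'+1) f) := rfl
      rw [h1, commLR hq (n+(k'+1)) _ x hs]
      have h2 : Rop q (n+(k'+1)) (Lop q α (RopIter q n (k'+1) f)) x
          = Rop q (n+(k'+1)) (fun y => lamC q α n (k'+1) * RopIter q n (k'+1-1) f y) x :=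
        Rop_congr x (fun y hy => ih (by omega) y (by omega))
      rw [h2, Rop_smul]
      rw [show n + (k'+1) = (n + k') + 1 from rfl, Rop_shift hq]
      have h3 : Rop q (n+k') (RopIter q n (k'+1-1) f) x = RopIter q n (k'+1) f x := rfl
      rw [h3]
      rw [lam_succ hq n (k'+1)]
      have h4 : RopIter q n (k'+1+1-1) f x = RopIter q n (k'+1) f x := rfl
      rw [h4]
      field_simp
      ring

lemma qPoch_succ (a : ℝ) (d : ℕ) : qPoch q a (d+1) = qPoch q a d * (1 - a * q^d) :=
  Finset.prod_range_succ _ _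

lemma scalar_step (hq : (q:ℂ) ≠ 0) (n m : ℕ) (hnm : n ≤ m) (d : ℕ) :
    lamC q α n ((m+d-n)+1) * ((-1:ℂ)^d * (q:ℂ)^(-((d*(2*m+d+1)/2:ℕ):ℤ)) *
      ((qPoch q (q^(m-n+1)) d : ℝ):ℂ) * ((qPoch q (Apar α h * q^(n+m+h)) d : ℝ):ℂ))
    = (-1:ℂ)^(d+1) * (q:ℂ)^(-(((d+1)*(2*m+d+2)/2:ℕ):ℤ)) *
      ((qPoch q (q^(m-n+1)) (d+1) : ℝ):ℂ) * ((qPoch q (Apar α h * q^(n+m+h)) (d+1) : ℝ):ℂ) := by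
  have hdiv : ((d+1)*(2*m+d+2)/2 : ℕ) = (d*(2*m+d+1)/2 + (m+d+1) : ℕ) := by
    have e : (d+1)*(2*m+d+2) = d*(2*m+d+1) + 2*(m+d+1) := by ring
    rw [e, Nat.add_mul_div_left _ _ (by norm_num : 0 < 2)]
  rw [hdiv, qPoch_succ, qPoch_succ]
  simp only [lamC]
  rw [show -((n:ℤ) + (((m+d-n)+1 : ℕ):ℤ)) = -(((m+d+1 : ℕ)):ℤ) by push_cast; omega,
      show (q:ℂ)^((((m+d-n)+1 : ℕ)):ℤ) = (q:ℂ)^((m-n+1) + d : ℕ) by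
        rw [← zpow_natCast (q:ℂ) ((m-n+1)+d)]; congr 1; omega,
      show (h:ℤ) + 2*(n:ℤ) + (((m+d-n)+1 : ℕ):ℤ) - 1 = (((n+m+h) + d : ℕ):ℤ) by push_cast; omega,
      zpow_natCast,
      show -((d*(2*m+d+1)/2 + (m+d+1) : ℕ):ℤ)
          = -(((d*(2*m+d+1)/2:ℕ)):ℤ) + -(((m+d+1:ℕ)):ℤ) by push_cast; ring]
  rw [zpow_add₀ hq]
  push_cast
  rw [pow_add, pow_add]
  ring


theorem stmt4 (q : ℝ) (hq0 : 0 < q) (hq1 : q < 1) (h : ℕ) (hh : 1 ≤ h)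
    (α : Fin h → ℝ) (hα : ∀ i, 0 < α i) (n m N : ℕ) (hnm : n ≤ m) (hmN : m ≤ N)
    (f : (Fin h → ℕ) → ℂ)
    (hker : n = 0 ∨ ∀ x : Fin h → ℕ, (∑ i, x i) + 1 = n → Lop q α f x = 0) :
    ∀ x : Fin h → ℕ, (∑ i, x i) = m →
      (Lop q α)^[N - m] (RopIter q n (N - n) f) x =
        (-1 : ℂ) ^ (N - m) * (q : ℂ) ^ (-(((N - m) * (N + m + 1) / 2 : ℕ) : ℤ)) *
          ((qPoch q (q ^ (m - n + 1)) (N - m) : ℝ) : ℂ) *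
          ((qPoch q (Apar α h * q ^ (n + m + h)) (N - m) : ℝ) : ℂ) *
          RopIter q n (m - n) f x := by
  have hq : (q:ℂ) ≠ 0 := Complex.ofReal_ne_zero.mpr (ne_of_gt hq0)
  obtain ⟨d, rfl⟩ : ∃ d, N = m + d := ⟨N - m, by omega⟩
  clear hmN
  induction d with
  | zero =>
    intro x hx
    rw [show m + 0 - m = 0 by omega, show m + 0 - n = m - n by omega]
    simp [qPoch]
  | succ d ih =>
    intro x hx
    rw [show m + (d+1) - m = d + 1 by omega,
        show m + (d+1) - n = (m + d - n) + 1 by omega,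
        show m + (d+1) + m + 1 = 2*m + d + 2 by omega]
    rw [Function.iterate_succ_apply]
    have hstep : ∀ y : Fin h → ℕ, (∑ j, y j) = (∑ j, x j) + d →
        Lop q α (RopIter q n ((m+d-n)+1) f) y
          = lamC q α n ((m+d-n)+1) * RopIter q n (m+d-n) f y := by
      intro y hy
      simpa using claimB hq n f hker ((m+d-n)+1) (by omega) y (by omega)
    rw [iterLop_congr d x hstep, iterLop_smul]
    have ihx := ih x hx
    rw [show m + d - m = d by omega, show m + d + m + 1 = 2*m + d + 1 by omega,
      show m + d - n = m + d - n from rfl] at ihx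
    rw [ihx, ← scalar_step hq n m hnm d]
    ring
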